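/- arXiv:1406.2145 — 4 statements merged into one kernel-verified Lean document; each statement's English description precedes it below -/
import Mathlib

section
/- For every prime ideal p of A, the set p′^f := {(p, f(p) + j) | p ∈ p, j ∈ J} is a prime ideal of A ⋈^f J. -/
set_option synthInstance.maxHeartbeats 1000000
set_option maxHeartbeats 1000000
/-- The amalgamation `A ⋈^f J` of `A` with `B` along `J` with respect to `f`,
as a subring of `A × B`. -/
def Amalg {A B : Type*} [CommRing A] [CommRing B] (f : A →+* B) (J : Ideal B) :
    Subring (A × B) where
  carrier := {p | ∃ a : A, ∃ j ∈ J, p = (a, f a + j)}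
  zero_mem' := ⟨0, 0, J.zero_mem, by ext <;> simp⟩
  one_mem' := ⟨1, 0, J.zero_mem, by ext <;> simp⟩
  add_mem' := by
    rintro _ _ ⟨a, j, hj, rfl⟩ ⟨a', j', hj', rfl⟩
    exact ⟨a + a', j + j', J.add_mem hj hj', by simp [Prod.ext_iff]; ring⟩
  neg_mem' := by
    rintro _ ⟨a, j, hj, rfl⟩
    exact ⟨-a, -j, J.neg_mem hj, by simp [Prod.ext_iff]; ring⟩
  mul_mem' := by
    rintro _ _ ⟨a, j, hj, rfl⟩ ⟨a', j', hj', rfl⟩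
    refine ⟨a * a', f a * j' + f a' * j + j * j',
      J.add_mem (J.add_mem (J.mul_mem_left _ hj') (J.mul_mem_left _ hj))
        (J.mul_mem_left _ hj'), by simp [Prod.ext_iff]; ring⟩

namespace Amalg

variable {A B : Type*} [CommRing A] [CommRing B] (f : A →+* B) (J : Ideal B)

def fst : Amalg f J →+* A :=
  (RingHom.fst A B).comp (Amalg f J).subtype

variable {f J}

@[simp]
theorem fst_apply (x : Amalg f J) : fst f J x = (x : A × B).1 := rfl

theorem mem_comap_fst_iff (p : Ideal A) (x : Amalg f J) :
    x ∈ p.comap (fst f J) ↔ ∃ a ∈ p, ∃ j ∈ J, (x : A × B) = (a, f a + j) := by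
  rw [Ideal.mem_comap, fst_apply]
  constructor
  · intro hx
    obtain ⟨a, j, hj, hxa⟩ := x.2
    exact ⟨a, by simpa [hxa] using hx, j, hj, hxa⟩
  · rintro ⟨a, ha, j, -, hxa⟩
    simpa [hxa] using ha

end Amalg

/-- For every prime ideal `p` of `A`, the set `p′^f = {(p, f(p)+j) | p ∈ p, j ∈ J}`
is a prime ideal of `A ⋈^f J`. -/
theorem amalgamation_prime_of_prime_A {A B : Type*} [CommRing A] [CommRing B]
    (f : A →+* B) (J : Ideal B) (p : Ideal A) (hp : p.IsPrime) :
    ∃ P : Ideal (Amalg f J),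
      (P : Set (Amalg f J)) =
        {x : Amalg f J | ∃ a ∈ p, ∃ j ∈ J, (x : A × B) = (a, f a + j)} ∧
      P.IsPrime :=
  ⟨p.comap (Amalg.fst f J), Set.ext (Amalg.mem_comap_fst_iff p), hp.comap _⟩
end

section
/- The ring A ⋈^f J is local if and only if A is local and J is contained in the Jacobson radical of B. -/
/-!
`A ⋈^f J` is the fibre product `A ×_{B/J} B` of `f` and `B → B/J`, so an element is a unit iff
both of its coordinates are. If `J` lies in the Jacobson radical, `B → B/J` reflects units, so
units of `A ⋈^f J` are detected by the `A`-coordinate alone, and `A ⋈^f J` is local exactly when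
`A` is. Conversely, if `A ⋈^f J` is local, then `(1, 1 + j y)` is a unit for `j ∈ J`, because
`1 - (1, 1 + j y) = (0, -j y)` is not; hence every `1 + j y` is a unit.
-/

set_option synthInstance.maxHeartbeats 1000000
set_option maxHeartbeats 1000000
namespace Amalg

variable {A B : Type*} [CommRing A] [CommRing B] (f : A →+* B) (J : Ideal B)

theorem mem_iff {p : A × B} :
    p ∈ Amalg f J ↔ Ideal.Quotient.mk J (f p.1) = Ideal.Quotient.mk J p.2 := by
  rw [Ideal.Quotient.eq]
  constructor
  · rintro ⟨a, j, hj, rfl⟩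
    simpa using J.neg_mem hj
  · intro h
    exact ⟨p.1, p.2 - f p.1, by simpa using J.neg_mem h, by simp⟩

theorem eq_eqLocus : Amalg f J =
    ((Ideal.Quotient.mk J).comp (f.comp (RingHom.fst A B))).eqLocus
      ((Ideal.Quotient.mk J).comp (RingHom.snd A B)) :=
  SetLike.ext fun _ => mem_iff f J

theorem isUnit_iff {x : Amalg f J} :
    IsUnit x ↔ IsUnit (x : A × B).1 ∧ IsUnit (x : A × B).2 := by
  rw [← Prod.isUnit_iff, ← MulEquiv.isUnit_map (RingEquiv.subringCongr (eq_eqLocus f J))]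
  exact RingHom.isUnit_eqLocus_mk_iff _ _ _

theorem fst_surjective : Function.Surjective (fst f J) :=
  fun a => ⟨⟨(a, f a), a, 0, J.zero_mem, by simp⟩, rfl⟩

theorem nontrivial_iff : Nontrivial (Amalg f J) ↔ Nontrivial A := by
  refine ⟨fun _ => ?_, fun _ => (fst_surjective f J).nontrivial⟩
  by_contra hA
  rw [not_nontrivial_iff_subsingleton] at hA
  have : Subsingleton B := f.codomain_trivial
  exact not_subsingleton (Amalg f J) inferInstance

theorem isUnit_iff_of_le_jacobson (hJ : J ≤ (⊥ : Ideal B).jacobson) {x : Amalg f J} :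
    IsUnit x ↔ IsUnit (fst f J x) := by
  have := isLocalHom_of_le_jacobson_bot J hJ
  refine ⟨fun hx => hx.map _, fun hx => (isUnit_iff f J).mpr ⟨hx, ?_⟩⟩
  refine isUnit_of_map_unit (Ideal.Quotient.mk J) _ ?_
  rw [← (mem_iff f J).mp x.2]
  exact (hx.map f).map _

theorem le_jacobson_of_isLocalRing [IsLocalRing (Amalg f J)] :
    J ≤ (⊥ : Ideal B).jacobson := by
  intro j hj
  refine Ideal.mem_jacobson_bot.mpr fun y => ?_
  let x : Amalg f J := ⟨(1, 1 + j * y), 1, j * y, J.mul_mem_right y hj, by simp⟩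
  have hx : IsUnit x := by
    refine (IsLocalRing.isUnit_or_isUnit_one_sub_self x).resolve_right fun h => ?_
    have : Nontrivial A := (nontrivial_iff f J).mp inferInstance
    simpa [x] using ((isUnit_iff f J).mp h).1
  simpa [x, add_comm] using ((isUnit_iff f J).mp hx).2

end Amalg

/-- `A ⋈^f J` is local iff `A` is local and `J` is contained in the Jacobson
radical of `B`. -/
theorem amalgamation_isLocalRing_iff {A B : Type*} [CommRing A] [CommRing B]
    (f : A →+* B) (J : Ideal B) :
    IsLocalRing (Amalg f J) ↔ IsLocalRing A ∧ J ≤ (⊥ : Ideal B).jacobson := by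
  constructor
  · intro _
    have := (Amalg.nontrivial_iff f J).mp inferInstance
    exact ⟨.of_surjective' _ (Amalg.fst_surjective f J), Amalg.le_jacobson_of_isLocalRing f J⟩
  · rintro ⟨_, hJ⟩
    have := (Amalg.nontrivial_iff f J).mpr inferInstance
    refine .of_isUnit_or_isUnit_one_sub_self fun x => ?_
    simpa [Amalg.isUnit_iff_of_le_jacobson f J hJ] using
      IsLocalRing.isUnit_or_isUnit_one_sub_self (Amalg.fst f J x)
end

section
/- If J² = 0, then Hom_{A ⋈^f J}(A, A ⋈^f J) is isomorphic as an A-module to Ann_A(J) ⊕ J, where Ann_A(J) := {a ∈ A | f(a)J = 0}. -/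
set_option synthInstance.maxHeartbeats 1000000
set_option maxHeartbeats 1000000
/-- The amalgamation as a subalgebra of `A × B`, when `B` is an `A`-algebra. -/
def AmalgA (A : Type*) {B : Type*} [CommRing A] [CommRing B] [Algebra A B] (J : Ideal B) :
    Subalgebra A (A × B) :=
  { Amalg (algebraMap A B) J with
    algebraMap_mem' := fun a => ⟨a, 0, J.zero_mem, by simp⟩ }

/-!
Since `A = (A ⋈ J) / (0 × J)`, evaluation at `1` identifies `Hom(A, A ⋈ J)` with the annihilator
of `0 × J` in `A ⋈ J`. An element `(a, f a + j)` kills `0 × J` iff `J (f a + j) = 0`, which by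
`J² = 0` means `f(a) J = 0`; so `(a, f a + j) ↦ (a, j)` maps that annihilator onto `Ann_A(J) ⊕ J`.
-/

theorem Ideal.mul_eq_zero_of_mul_self_eq_bot {R : Type*} [CommSemiring R] {I : Ideal R}
    (hI : I * I = ⊥) {x y : R} (hx : x ∈ I) (hy : y ∈ I) : x * y = 0 := by
  simpa [hI] using Ideal.mul_mem_mul hx hy

namespace AmalgA

variable {A B : Type*} [CommRing A] [CommRing B] [Algebra A B] {J : Ideal B}

theorem snd_sub_algebraMap_fst_mem (r : AmalgA A J) :
    (r : A × B).2 - algebraMap A B (r : A × B).1 ∈ J := by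
  obtain ⟨a, j, hj, h⟩ := r.2
  simpa [h] using hj

theorem mk_mem (a : A) {j : B} (hj : j ∈ J) : (a, algebraMap A B a + j) ∈ AmalgA A J :=
  ⟨a, j, hj, rfl⟩

theorem mem_annihilator_restrictScalars {a : A} :
    a ∈ (J.restrictScalars A).annihilator ↔ ∀ x ∈ J, algebraMap A B a * x = 0 := by
  simp [Submodule.mem_annihilator, Algebra.smul_def]

variable (A J) in
/-- The annihilator of the ideal `0 × J` of `A ⋈ J`. -/
def annZeroProd : Submodule A (AmalgA A J) where
  carrier := {e | ∀ j ∈ J, j * (e : A × B).2 = 0}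
  zero_mem' := by simp
  add_mem' {e e'} he he' j hj := by simp [mul_add, he j hj, he' j hj]
  smul_mem' c e he j hj := by simp [he j hj]

theorem algebraMap_fst_mul_of_mem_annZeroProd (r : AmalgA A J) {e : AmalgA A J}
    (he : e ∈ annZeroProd A J) : algebraMap A (AmalgA A J) (r : A × B).1 * e = r * e := by
  have hk := he _ (snd_sub_algebraMap_fst_mem r)
  ext
  · simp
  · simp only [MulMemClass.coe_mul, SubalgebraClass.coe_algebraMap, Prod.algebraMap_apply,
      Algebra.algebraMap_self, RingHom.id_apply, Prod.snd_mul]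
    linear_combination -hk

abbrev fstModule : Module (AmalgA A J) A :=
  Module.compHom A ((RingHom.fst A B).comp (AmalgA A J).subtype)

attribute [local instance] fstModule

abbrev homModule : Module A (A →ₗ[AmalgA A J] AmalgA A J) :=
  Module.compHom _ (algebraMap A (AmalgA A J))

attribute [local instance] homModule

theorem map_eq_algebraMap_mul_map_one (φ : A →ₗ[AmalgA A J] AmalgA A J) (x : A) :
    φ x = algebraMap A (AmalgA A J) x * φ 1 := by
  calc φ x = φ (algebraMap A (AmalgA A J) x • 1) := congrArg φ (mul_one x).symm
    _ = _ := φ.map_smul _ _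

theorem map_one_mem_annZeroProd (φ : A →ₗ[AmalgA A J] AmalgA A J) : φ 1 ∈ annZeroProd A J := by
  intro j hj
  let s : AmalgA A J := ⟨(0, j), by simpa using mk_mem (0 : A) hj⟩
  have hs : s * φ 1 = 0 := by
    rw [← smul_eq_mul, ← φ.map_smul, show s • (1 : A) = 0 from zero_mul 1, φ.map_zero]
  simpa [s] using congrArg (fun e : AmalgA A J => (e : A × B).2) hs

variable (J) in
def homOfMemAnnZeroProd (e : annZeroProd A J) : A →ₗ[AmalgA A J] AmalgA A J where
  toFun x := algebraMap A (AmalgA A J) x * e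
  map_add' x y := by rw [map_add, add_mul]
  map_smul' r x := by
    change algebraMap A _ ((r : A × B).1 * x) * e = r * (algebraMap A _ x * e)
    rw [map_mul, mul_right_comm, algebraMap_fst_mul_of_mem_annZeroProd r e.2, mul_right_comm,
      mul_assoc]

variable (J) in
def homEquivAnnZeroProd : (A →ₗ[AmalgA A J] AmalgA A J) ≃ₗ[A] annZeroProd A J where
  toFun φ := ⟨φ 1, map_one_mem_annZeroProd φ⟩
  map_add' _ _ := rfl
  map_smul' c φ := Subtype.ext (Algebra.smul_def c (φ 1)).symm
  invFun := homOfMemAnnZeroProd J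
  left_inv φ := LinearMap.ext fun x => (map_eq_algebraMap_mul_map_one φ x).symm
  right_inv e := Subtype.ext (by simp [homOfMemAnnZeroProd])

theorem mem_annZeroProd_iff (hJ2 : J * J = ⊥) {e : AmalgA A J} :
    e ∈ annZeroProd A J ↔ (e : A × B).1 ∈ (J.restrictScalars A).annihilator := by
  have hk := snd_sub_algebraMap_fst_mem e
  rw [mem_annihilator_restrictScalars]
  refine forall₂_congr fun j hj => ?_
  have hjk := Ideal.mul_eq_zero_of_mul_self_eq_bot hJ2 hj hk
  exact ⟨fun h => by linear_combination h - hjk, fun h => by linear_combination h + hjk⟩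

variable (J) in
def annZeroProdEquivProd (hJ2 : J * J = ⊥) :
    annZeroProd A J ≃ₗ[A] (J.restrictScalars A).annihilator × J.restrictScalars A where
  toFun e := (⟨(e : A × B).1, (mem_annZeroProd_iff hJ2).1 e.2⟩,
    ⟨(e : A × B).2 - algebraMap A B (e : A × B).1, snd_sub_algebraMap_fst_mem e.1⟩)
  map_add' e e' := by ext <;> simp; ring
  map_smul' c e := by ext <;> simp [Algebra.smul_def]; ring
  invFun p :=
    ⟨⟨(p.1, algebraMap A B p.1 + p.2), mk_mem _ p.2.2⟩, (mem_annZeroProd_iff hJ2).2 p.1.2⟩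
  left_inv e := by ext <;> simp
  right_inv p := by ext <;> simp

end AmalgA

open AmalgA in
/-- If `J² = 0`, then `Hom_{A ⋈^f J}(A, A ⋈^f J) ≅ Ann_A(J) ⊕ J` as `A`-modules. -/
theorem amalgamation_hom_iso_ann_oplus_J {A B : Type*} [CommRing A] [CommRing B]
    [Algebra A B] (J : Ideal B) (hJ2 : J * J = ⊥) :
    letI : Module (AmalgA A J) A :=
      Module.compHom A ((RingHom.fst A B).comp (AmalgA A J).subtype)
    letI : Module A (A →ₗ[AmalgA A J] AmalgA A J) :=
      Module.compHom _ (algebraMap A (AmalgA A J))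
    ∃ I : Ideal A,
      (I : Set A) = {a : A | ∀ x ∈ J, algebraMap A B a * x = 0} ∧
      Nonempty ((A →ₗ[AmalgA A J] AmalgA A J) ≃ₗ[A]
        (I × Submodule.restrictScalars A J)) :=
  ⟨(J.restrictScalars A).annihilator, Set.ext fun _ => mem_annihilator_restrictScalars,
    ⟨(homEquivAnnZeroProd J).trans (annZeroProdEquivProd J hJ2)⟩⟩
end

section
/- If J² = 0, then for every prime ideal p of A, the localization J_p is isomorphic as an A_p-module to the localization J_{S_p} := S_p⁻¹J, where S_p := f(A \ p) + J is a multiplicative subset of B; the isomorphism sends x/t to x/f(t). -/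
/-!
Because `J² = 0`, an element `f(a) + j` of `S_p` acts on `J` exactly as `f(a)` does. Hence
localizing `J` at `S_p` is the same as localizing it at `f(A \ p)`, and localizing a `B`-module at
the image of `A \ p` is localizing it, as an `A`-module, at `A \ p`.
-/

namespace Submonoid

variable {A B : Type*} [CommRing A] [CommRing B] [Algebra A B]

def algebraMapAddIdeal (M : Submonoid A) (J : Ideal B) : Submonoid B where
  carrier := {b | ∃ a ∈ M, ∃ j ∈ J, b = algebraMap A B a + j}
  one_mem' := ⟨1, M.one_mem, 0, J.zero_mem, by simp⟩
  mul_mem' := by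
    rintro _ _ ⟨a, ha, j, hj, rfl⟩ ⟨a', ha', j', hj', rfl⟩
    refine ⟨a * a', M.mul_mem ha ha', algebraMap A B a * j' + j * (algebraMap A B a' + j'),
      J.add_mem (J.mul_mem_left _ hj') (J.mul_mem_right _ hj), by rw [map_mul]; ring⟩

theorem algebraMapSubmonoid_le_algebraMapAddIdeal (M : Submonoid A) (J : Ideal B) :
    Algebra.algebraMapSubmonoid B M ≤ M.algebraMapAddIdeal J := by
  rintro _ ⟨a, ha, rfl⟩
  exact ⟨a, ha, 0, J.zero_mem, (add_zero _).symm⟩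

end Submonoid

theorem Module.compHom_algebraMap_eq {A B L : Type*} [CommSemiring A] [Semiring B] [Algebra A B]
    [AddCommMonoid L] [Module B L] [inst : Module A L] [IsScalarTower A B L] :
    Module.compHom L (algebraMap A B) = inst :=
  Module.ext' _ _ fun a m ↦ algebraMap_smul B a m

theorem IsLocalizedModule.of_le_of_forall_exists_smul_eq {R M N : Type*} [CommSemiring R]
    [AddCommMonoid M] [Module R M] [AddCommMonoid N] [Module R N]
    {S T : Submonoid R} (hTS : T ≤ S) (hST : ∀ s ∈ S, ∃ t ∈ T, ∀ m : M, s • m = t • m)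
    (f : M →ₗ[R] N) [IsLocalizedModule S f] : IsLocalizedModule T f where
  map_units t := map_units f ⟨t, hTS t.2⟩
  surj y := by
    obtain ⟨⟨m, s⟩, hs⟩ := surj S f y
    obtain ⟨t, ht, hst⟩ := hST s s.2
    refine ⟨⟨m, ⟨t, ht⟩⟩, smul_injective f s ?_⟩
    simp only [Submonoid.smul_def] at hs ⊢
    rw [smul_comm, hs, ← map_smul, ← hst, map_smul]
  exists_of_eq {m₁ m₂} h := by
    obtain ⟨c, hc⟩ := exists_of_eq (S := S) h
    obtain ⟨t, ht, hct⟩ := hST c c.2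
    exact ⟨⟨t, ht⟩, by simpa only [Submonoid.smul_def, hct] using hc⟩

theorem IsLocalizedModule.iso_restrictScalars_mk {A B N L : Type*} [CommRing A] [CommRing B]
    [Algebra A B] [AddCommMonoid N] [Module B N] [Module A N] [IsScalarTower A B N]
    [AddCommMonoid L] [Module B L] [Module A L] [IsScalarTower A B L]
    {M : Submonoid A} {S : Submonoid B} (f : N →ₗ[B] L) [IsLocalizedModule S f]
    [IsLocalizedModule M (f.restrictScalars A)] (n : N) {t : M} {s : S}
    (hs : (s : B) = algebraMap A B t) :
    iso M (f.restrictScalars A) (LocalizedModule.mk n t) = mk' f n s := by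
  rw [iso_apply_mk, Module.End.algebraMap_isUnit_inv_apply_eq_iff, ← algebraMap_smul B, ← hs,
    ← Submonoid.smul_def, mk'_cancel']
  rfl

section Annihilator

variable {A B N : Type*} [CommRing A] [CommRing B] [Algebra A B] [AddCommMonoid N] [Module B N]
  {J : Ideal B}

theorem exists_algebraMap_smul_eq_of_mem_algebraMapAddIdeal {M : Submonoid A} (hJ : J ≤ Module.annihilator B N)
    {s : B} (hs : s ∈ M.algebraMapAddIdeal J) :
    ∃ t ∈ Algebra.algebraMapSubmonoid B M, ∀ n : N, s • n = t • n := by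
  obtain ⟨a, ha, j, hj, rfl⟩ := hs
  exact ⟨algebraMap A B a, ⟨a, ha, rfl⟩, fun n ↦ by
    rw [add_smul, Module.mem_annihilator.mp (hJ hj) n, add_zero]⟩

variable {L : Type*} [Module A N] [IsScalarTower A B N]
  [AddCommMonoid L] [Module B L] [Module A L] [IsScalarTower A B L]

theorem IsLocalizedModule.restrictScalars_of_le_annihilator (M : Submonoid A) (f : N →ₗ[B] L)
    [IsLocalizedModule (M.algebraMapAddIdeal J) f] (hJ : J ≤ Module.annihilator B N) :
    IsLocalizedModule M (f.restrictScalars A) :=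
  have := of_le_of_forall_exists_smul_eq (M.algebraMapSubmonoid_le_algebraMapAddIdeal J)
    (fun _ ↦ exists_algebraMap_smul_eq_of_mem_algebraMapAddIdeal hJ) f
  restrictScalars M f

end Annihilator

/-- If `J² = 0` then, for every prime `p` of `A`, `J_p ≅ S_p⁻¹J` as `A`-modules
(hence as `A_p`-modules), where `S_p = f(A \ p) + J`, via `x/t ↦ x/f(t)`. -/
theorem localization_J_iso_of_sq_zero {A B : Type*} [CommRing A] [CommRing B]
    [Algebra A B] (J : Ideal B) (hJ2 : J * J = ⊥) (p : Ideal A) [hp : p.IsPrime] :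
    ∃ S : Submonoid B,
      (S : Set B) = {b : B | ∃ a : A, a ∉ p ∧ ∃ j ∈ J, b = algebraMap A B a + j} ∧
      letI : Module A (LocalizedModule S J) := Module.compHom _ (algebraMap A B)
      ∃ e : LocalizedModule p.primeCompl (Submodule.restrictScalars A J) ≃ₗ[A]
          LocalizedModule S J,
        ∀ (x : J) (t : p.primeCompl) (s : S), (s : B) = algebraMap A B (t : A) →
          e (LocalizedModule.mk ⟨(x : B), x.2⟩ t) = LocalizedModule.mk x s := by
  let S := p.primeCompl.algebraMapAddIdeal J
  refine ⟨S, rfl, ?_⟩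
  rw [Module.compHom_algebraMap_eq]
  let f := LocalizedModule.mkLinearMap S J
  have : IsLocalizedModule p.primeCompl (f.restrictScalars A) :=
    .restrictScalars_of_le_annihilator p.primeCompl f (Submodule.le_annihilator_iff.mpr hJ2)
  -- elaborated apart from the goal, whose source `↥(J.restrictScalars A)` is only defeq to `↥J`
  let e := IsLocalizedModule.iso p.primeCompl (f.restrictScalars A)
  exact ⟨e, fun x t s hs ↦
    (IsLocalizedModule.iso_restrictScalars_mk f x hs).trans (IsLocalizedModule.mk_eq_mk' s x).symm⟩
end
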